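/- arXiv:1911.03315 — 3 statements merged into one kernel-verified Lean document; each statement's English description precedes it below -/
import Mathlib

section
/- Uniform continuity of the finite-horizon MPC cost: if the stage cost ℓ and terminal cost V_f satisfy ‖ℓ(x,u) − ℓ(z,u)‖ ≤ σ_ℓ(‖x−z‖) and ‖V_f(x) − V_f(z)‖ ≤ σ_{V_f}(‖x−z‖) for class-K functions σ_ℓ, σ_{V_f}, and the dynamics satisfy ‖F̂(x,u) − F̂(z,u)‖ ≤ σ_x(‖x−z‖) for a class-K function σ_x, then for any fixed input sequence u_0,…,u_{N-1} the cost V_N(x, u) = Σ_{i=0}^{N-1} ℓ(x̂_i, u_i) + V_f(x̂_N) (with x̂_0 = x, x̂_{i+1} = F̂(x̂_i,u_i)) satisfies |V_N(x,u) − V_N(z,u)| ≤ Σ_{i=0}^{N-1} σ_ℓ(σ_x^i(‖x−z‖)) + σ_{V_f}(σ_x^N(‖x−z‖)), and the right-hand side, as a function of ‖x−z‖, is a class-K function. -/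
/-!
Two trajectories driven by the same inputs stay within `σx^[i]` of their initial distance, so
the monotone moduli of `ℓ` and `Vf` bound the cost difference termwise. Peeling off the first
stage writes the horizon-`N + 1` bound as `σl` plus the horizon-`N` bound composed with `σx`;
since class-K functions are closed under sums and composition, induction on `N` shows the
bound is class-K.
-/

/-- A class-K function: continuous, strictly increasing on `[0, ∞)`, vanishing at `0`. -/
def IsClassK (α : ℝ → ℝ) : Prop :=
  ContinuousOn α (Set.Ici 0) ∧ StrictMonoOn α (Set.Ici 0) ∧ α 0 = 0

namespace IsClassK

variable {α β : ℝ → ℝ}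

lemma monotoneOn (h : IsClassK α) : MonotoneOn α (Set.Ici 0) :=
  h.2.1.monotoneOn

lemma nonneg (h : IsClassK α) {t : ℝ} (ht : 0 ≤ t) : 0 ≤ α t :=
  h.2.2 ▸ h.monotoneOn Set.self_mem_Ici ht ht

lemma mapsTo (h : IsClassK α) : Set.MapsTo α (Set.Ici 0) (Set.Ici 0) :=
  fun _ ht => h.nonneg ht

lemma comp (hα : IsClassK α) (hβ : IsClassK β) : IsClassK (fun s => α (β s)) :=
  ⟨hα.1.comp hβ.1 hβ.mapsTo, hα.2.1.comp hβ.2.1 hβ.mapsTo, by simp only [hβ.2.2, hα.2.2]⟩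

lemma add (hα : IsClassK α) (hβ : IsClassK β) : IsClassK (fun s => α s + β s) :=
  ⟨hα.1.add hβ.1, fun _ ha _ hb hab => add_lt_add (hα.2.1 ha hb hab) (hβ.2.1 ha hb hab),
    by simp only [hα.2.2, hβ.2.2, add_zero]⟩

lemma iterate (h : IsClassK α) : ∀ i, IsClassK (α^[i])
  | 0 => ⟨continuousOn_id, strictMonoOn_id, rfl⟩
  | i + 1 => by
    rw [Function.iterate_succ']
    exact h.comp (h.iterate i)

end IsClassK

lemma isClassK_sum_iterate_add_iterate {σl σVf σx : ℝ → ℝ} (hσl : IsClassK σl)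
    (hσVf : IsClassK σVf) (hσx : IsClassK σx) :
    ∀ N, IsClassK (fun s => (∑ i ∈ Finset.range N, σl (σx^[i] s)) + σVf (σx^[N] s))
  | 0 => by simpa using hσVf
  | N + 1 => by
    have peel : (fun s => (∑ i ∈ Finset.range (N + 1), σl (σx^[i] s)) + σVf (σx^[N + 1] s)) =
        fun s => σl s +
          ((∑ i ∈ Finset.range N, σl (σx^[i] (σx s))) + σVf (σx^[N] (σx s))) := by
      funext s
      simp only [Finset.sum_range_succ', Function.iterate_succ_apply, Function.iterate_zero_apply]
      ring
    rw [peel]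
    exact hσl.add ((isClassK_sum_iterate_add_iterate hσl hσVf hσx N).comp hσx)

lemma norm_sub_le_iterate_of_modulus {E U : Type*} [SeminormedAddCommGroup E]
    {F : E → U → E} {σ : ℝ → ℝ} (hσ : IsClassK σ)
    (hF : ∀ a b u, ‖F a u - F b u‖ ≤ σ ‖a - b‖) {u : ℕ → U} {xh zh : ℕ → E}
    (hxs : ∀ i, xh (i + 1) = F (xh i) (u i)) (hzs : ∀ i, zh (i + 1) = F (zh i) (u i)) :
    ∀ i, ‖xh i - zh i‖ ≤ σ^[i] ‖xh 0 - zh 0‖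
  | 0 => le_rfl
  | i + 1 => by
    rw [hxs, hzs, Function.iterate_succ_apply']
    calc ‖F (xh i) (u i) - F (zh i) (u i)‖ ≤ σ ‖xh i - zh i‖ := hF _ _ _
      _ ≤ σ (σ^[i] ‖xh 0 - zh 0‖) :=
        hσ.monotoneOn (norm_nonneg _) ((hσ.iterate i).nonneg (norm_nonneg _))
          (norm_sub_le_iterate_of_modulus hσ hF hxs hzs i)

lemma abs_sum_add_sub_sum_add_le {ι : Type*} {s : Finset ι} {f g c : ι → ℝ} {a b d : ℝ}
    (hfg : ∀ i ∈ s, |f i - g i| ≤ c i) (hab : |a - b| ≤ d) :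
    |((∑ i ∈ s, f i) + a) - ((∑ i ∈ s, g i) + b)| ≤ (∑ i ∈ s, c i) + d :=
  calc |((∑ i ∈ s, f i) + a) - ((∑ i ∈ s, g i) + b)|
      = |(∑ i ∈ s, (f i - g i)) + (a - b)| := by rw [Finset.sum_sub_distrib]; ring_nf
    _ ≤ |∑ i ∈ s, (f i - g i)| + |a - b| := abs_add_le _ _
    _ ≤ (∑ i ∈ s, c i) + d :=
      add_le_add ((Finset.abs_sum_le_sum_abs _ _).trans (Finset.sum_le_sum hfg)) hab

/-- Uniform continuity of the finite-horizon MPC cost: if stage cost, terminal cost and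
dynamics are uniformly continuous in the state with class-K moduli, then the horizon-`N`
cost difference is bounded by `Σ σℓ(σx^[i]‖x−z‖) + σVf(σx^[N]‖x−z‖)`, and this bound is
itself a class-K function of `‖x−z‖`. -/
theorem cost_uniform_continuity {n : ℕ} {U : Type*}
    (F : EuclideanSpace ℝ (Fin n) → U → EuclideanSpace ℝ (Fin n))
    (ℓ : EuclideanSpace ℝ (Fin n) → U → ℝ) (Vf : EuclideanSpace ℝ (Fin n) → ℝ)
    (σl σVf σx : ℝ → ℝ)
    (hσl : IsClassK σl) (hσVf : IsClassK σVf) (hσx : IsClassK σx)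
    (hl : ∀ a b u, |ℓ a u - ℓ b u| ≤ σl ‖a - b‖)
    (hVf : ∀ a b, |Vf a - Vf b| ≤ σVf ‖a - b‖)
    (hF : ∀ a b u, ‖F a u - F b u‖ ≤ σx ‖a - b‖)
    (N : ℕ) (u : ℕ → U) (x z : EuclideanSpace ℝ (Fin n))
    (xh zh : ℕ → EuclideanSpace ℝ (Fin n))
    (hx0 : xh 0 = x) (hz0 : zh 0 = z)
    (hxs : ∀ i, xh (i + 1) = F (xh i) (u i))
    (hzs : ∀ i, zh (i + 1) = F (zh i) (u i)) :
    |((∑ i ∈ Finset.range N, ℓ (xh i) (u i)) + Vf (xh N)) -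
        ((∑ i ∈ Finset.range N, ℓ (zh i) (u i)) + Vf (zh N))| ≤
      (∑ i ∈ Finset.range N, σl (σx^[i] ‖x - z‖)) + σVf (σx^[N] ‖x - z‖) ∧
    IsClassK (fun s => (∑ i ∈ Finset.range N, σl (σx^[i] s)) + σVf (σx^[N] s)) := by
  have deviation : ∀ i, ‖xh i - zh i‖ ≤ σx^[i] ‖x - z‖ := by
    simpa only [hx0, hz0] using norm_sub_le_iterate_of_modulus hσx hF hxs hzs
  have modulus_le {σ : ℝ → ℝ} (hσ : IsClassK σ) (i : ℕ) :
      σ ‖xh i - zh i‖ ≤ σ (σx^[i] ‖x - z‖) :=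
    hσ.monotoneOn (norm_nonneg _) ((hσx.iterate i).nonneg (norm_nonneg _)) (deviation i)
  refine ⟨abs_sum_add_sub_sum_add_le (fun i _ => ?_) ?_,
    isClassK_sum_iterate_add_iterate hσl hσVf hσx N⟩
  · exact (hl _ _ _).trans (modulus_le hσl i)
  · exact (hVf _ _).trans (modulus_le hσVf N)
end

section
/- Cholesky update under bordering: let K = Rᵀ R be the Cholesky decomposition of a symmetric positive definite matrix K written in 2×2 block form with blocks K11, K13; K13ᵀ, K33, and let the enlarged symmetric positive definite matrix K' have 3×3 block form with new middle row/column blocks K12, K22, K23. Then the upper triangular matrix S with blocks S11 = R11, S12 = R11⁻ᵀ K12, S13 = R13, S22 = chol(K22 − S12ᵀ S12), S23 = S22⁻ᵀ (K23 − S12ᵀ S13), S33 = chol(R33ᵀ R33 − S23ᵀ S23) satisfies Sᵀ S = K'. -/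
open Matrix

/-! Each block of `Sᵀ S` is a sum of products of blocks of `S`, and the update formulas are these
block equations solved one block at a time (e.g. `K23 = S12ᵀ S13 + S22ᵀ S23`). The blocks
`S11 = R11` and `S13 = R13` carried over from `R` reproduce `K11` and `K13`, and, since `S33` absorbs
`S23ᵀ S23`, also `K33 = R13ᵀ R13 + R33ᵀ R33`. -/

namespace Matrix

variable {l m n o p α : Type*} [Fintype l] [Fintype m]

theorem transpose_fromBlocks_zero₂₁_mul_self [NonUnitalNonAssocCommSemiring α]
    (A : Matrix l n α) (B : Matrix l o α) (D : Matrix m o α) :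
    (fromBlocks A B 0 D)ᵀ * fromBlocks A B 0 D =
      fromBlocks (Aᵀ * A) (Aᵀ * B) (Aᵀ * B)ᵀ (Bᵀ * B + Dᵀ * D) := by
  simp [fromBlocks_transpose, fromBlocks_multiply, transpose_mul]

theorem transpose_fromBlocks_zero₂₁_mul_fromRows [Semiring α]
    (A : Matrix l n α) (B : Matrix l o α) (D : Matrix m o α) (E : Matrix l p α) (F : Matrix m p α) :
    (fromBlocks A B 0 D)ᵀ * fromRows E F = fromRows (Aᵀ * E) (Bᵀ * E + Dᵀ * F) := by
  rw [fromBlocks_transpose, fromBlocks_mul_fromRows, transpose_zero, Matrix.zero_mul,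
    add_zero]

end Matrix

theorem cholesky_update_general
    {a b c : Type*} [Fintype a] [Fintype b] [Fintype c]
    (K11 : Matrix a a ℝ) (K12 : Matrix a b ℝ) (K13 : Matrix a c ℝ)
    (K22 : Matrix b b ℝ) (K23 : Matrix b c ℝ) (K33 : Matrix c c ℝ)
    (R11 : Matrix a a ℝ) (R13 : Matrix a c ℝ) (R33 : Matrix c c ℝ)
    (S11 : Matrix a a ℝ) (S12 : Matrix a b ℝ) (S13 : Matrix a c ℝ)
    (S22 : Matrix b b ℝ) (S23 : Matrix b c ℝ) (S33 : Matrix c c ℝ)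
    -- K is positive definite with Cholesky factor R
    (hchol : Matrix.fromBlocks K11 K13 K13ᵀ K33 =
      (Matrix.fromBlocks R11 R13 0 R33)ᵀ * Matrix.fromBlocks R11 R13 0 R33)
    -- defining equations of the updated Cholesky blocks
    (hS11 : S11 = R11)
    (hS12 : R11ᵀ * S12 = K12)
    (hS13 : S13 = R13)
    (hS22 : S22ᵀ * S22 = K22 - S12ᵀ * S12)
    (hS23 : S22ᵀ * S23 = K23 - S12ᵀ * S13)
    (hS33 : S33ᵀ * S33 = R33ᵀ * R33 - S23ᵀ * S23) :
    (Matrix.fromBlocks (Matrix.fromBlocks S11 S12 0 S22)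
        (Matrix.fromRows S13 S23) 0 S33)ᵀ *
      Matrix.fromBlocks (Matrix.fromBlocks S11 S12 0 S22)
        (Matrix.fromRows S13 S23) 0 S33 =
    Matrix.fromBlocks (Matrix.fromBlocks K11 K12 K12ᵀ K22)
      (Matrix.fromRows K13 K23) (Matrix.fromCols K13ᵀ K23ᵀ) K33 := by
  rw [transpose_fromBlocks_zero₂₁_mul_self] at hchol
  obtain ⟨hK11, hK13, -, hK33⟩ := fromBlocks_inj.1 hchol
  subst hS11 hS13
  rw [← transpose_fromRows, transpose_fromBlocks_zero₂₁_mul_self,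
    transpose_fromBlocks_zero₂₁_mul_self, transpose_fromBlocks_zero₂₁_mul_fromRows,
    transpose_fromRows S13, fromCols_mul_fromRows, hS12, hS22, hS23, hS33, add_sub_cancel,
    add_sub_cancel, add_add_sub_cancel, hK11, hK13, hK33]

/-- Cholesky update under bordering: inserting a middle block row/column.  Given the
Cholesky factorisation `K = Rᵀ R` of the original 2×2 block matrix, and blocks `S`
defined by the update formulas (expressed as their defining equations), the assembled
upper block-triangular matrix `S` satisfies `Sᵀ S = K'`. -/
theorem cholesky_update
    {a b c : Type*} [Fintype a] [Fintype b] [Fintype c]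
    [DecidableEq a] [DecidableEq b] [DecidableEq c]
    (K11 : Matrix a a ℝ) (K12 : Matrix a b ℝ) (K13 : Matrix a c ℝ)
    (K22 : Matrix b b ℝ) (K23 : Matrix b c ℝ) (K33 : Matrix c c ℝ)
    (R11 : Matrix a a ℝ) (R13 : Matrix a c ℝ) (R33 : Matrix c c ℝ)
    (S11 : Matrix a a ℝ) (S12 : Matrix a b ℝ) (S13 : Matrix a c ℝ)
    (S22 : Matrix b b ℝ) (S23 : Matrix b c ℝ) (S33 : Matrix c c ℝ)
    -- K is positive definite with Cholesky factor R
    (hK : (Matrix.fromBlocks K11 K13 K13ᵀ K33).PosDef)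
    (hchol : Matrix.fromBlocks K11 K13 K13ᵀ K33 =
      (Matrix.fromBlocks R11 R13 0 R33)ᵀ * Matrix.fromBlocks R11 R13 0 R33)
    -- the enlarged matrix is positive definite
    (hK' : (Matrix.fromBlocks (Matrix.fromBlocks K11 K12 K12ᵀ K22)
      (Matrix.fromRows K13 K23) (Matrix.fromCols K13ᵀ K23ᵀ) K33).PosDef)
    -- defining equations of the updated Cholesky blocks
    (hS11 : S11 = R11)
    (hS12 : R11ᵀ * S12 = K12)
    (hS13 : S13 = R13)
    (hS22 : S22ᵀ * S22 = K22 - S12ᵀ * S12)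
    (hS23 : S22ᵀ * S23 = K23 - S12ᵀ * S13)
    (hS33 : S33ᵀ * S33 = R33ᵀ * R33 - S23ᵀ * S23) :
    (Matrix.fromBlocks (Matrix.fromBlocks S11 S12 0 S22)
        (Matrix.fromRows S13 S23) 0 S33)ᵀ *
      Matrix.fromBlocks (Matrix.fromBlocks S11 S12 0 S22)
        (Matrix.fromRows S13 S23) 0 S33 =
    Matrix.fromBlocks (Matrix.fromBlocks K11 K12 K12ᵀ K22)
      (Matrix.fromRows K13 K23) (Matrix.fromCols K13ᵀ K23ᵀ) K33 :=
  cholesky_update_general K11 K12 K13 K22 K23 K33 R11 R13 R33 S11 S12 S13 S22 S23 S33 hchol hS11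
    hS12 hS13 hS22 hS23 hS33
end

section
/- Cholesky downdate under row/column deletion: let K be symmetric positive definite in 3×3 block form with upper-triangular Cholesky factor R having blocks R11, R12, R13; 0, R22, R23; 0, 0, R33. Then the matrix S with blocks S11 = R11, S13 = R13, S33 = chol(R23ᵀ R23 + R33ᵀ R33) is an upper-triangular Cholesky factor of the submatrix obtained from K by deleting the middle block row and column, i.e., Sᵀ S equals the 2×2 block matrix [K11, K13; K13ᵀ, K33]. -/
open Matrix

/-!
Write the Cholesky factor of `K` as the 2×2 block upper triangular matrix with blocks
`A = [R11, R12; 0, R22]`, `B = [R13; R23]` and `R33`. The Gram matrix of a block upper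
triangular matrix `[A, B; 0, D]` is `[AᵀA, AᵀB; BᵀA, BᵀB + DᵀD]`, so reading off blocks of
`K = RᵀR` gives `K11 = R11ᵀR11`, `K13 = R11ᵀR13` and
`K33 = R13ᵀR13 + R23ᵀR23 + R33ᵀR33`. The same Gram formula for `S = [R11, R13; 0, S33]`
produces exactly these blocks once `S33ᵀS33 = R23ᵀR23 + R33ᵀR33`.
-/

namespace Matrix

variable {l m n o p α : Type*} [Fintype l] [Semiring α]

theorem fromBlocks_zero₂₁_transpose_mul_self [Fintype o]
    (A : Matrix l m α) (B : Matrix l n α) (D : Matrix o n α) :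
    (fromBlocks A B 0 D)ᵀ * fromBlocks A B 0 D =
      fromBlocks (Aᵀ * A) (Aᵀ * B) (Bᵀ * A) (Bᵀ * B + Dᵀ * D) := by
  rw [fromBlocks_transpose, fromBlocks_multiply]
  simp only [transpose_zero, Matrix.zero_mul, Matrix.mul_zero, add_zero]

theorem fromBlocks_zero₂₁_transpose_mul_fromRows [Fintype m]
    (A : Matrix l n α) (B : Matrix l o α) (D : Matrix m o α)
    (X : Matrix l p α) (Y : Matrix m p α) :
    (fromBlocks A B 0 D)ᵀ * fromRows X Y = fromRows (Aᵀ * X) (Bᵀ * X + Dᵀ * Y) := by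
  rw [fromBlocks_transpose, fromBlocks_mul_fromRows, transpose_zero, Matrix.zero_mul, add_zero]

theorem fromRows_transpose_mul_self [Fintype m]
    (X : Matrix l n α) (Y : Matrix m n α) :
    (fromRows X Y)ᵀ * fromRows X Y = Xᵀ * X + Yᵀ * Y := by
  rw [transpose_fromRows, fromCols_mul_fromRows]

end Matrix

theorem cholesky_downdate_general
    {a b c : Type*} [Fintype a] [Fintype b] [Fintype c]
    (K11 : Matrix a a ℝ) (K12 : Matrix a b ℝ) (K13 : Matrix a c ℝ)
    (K22 : Matrix b b ℝ) (K23 : Matrix b c ℝ) (K33 : Matrix c c ℝ)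
    (R11 : Matrix a a ℝ) (R12 : Matrix a b ℝ) (R13 : Matrix a c ℝ)
    (R22 : Matrix b b ℝ) (R23 : Matrix b c ℝ) (R33 : Matrix c c ℝ)
    (S33 : Matrix c c ℝ)
    (hchol : Matrix.fromBlocks (Matrix.fromBlocks K11 K12 K12ᵀ K22)
        (Matrix.fromRows K13 K23) (Matrix.fromCols K13ᵀ K23ᵀ) K33 =
      (Matrix.fromBlocks (Matrix.fromBlocks R11 R12 0 R22)
          (Matrix.fromRows R13 R23) 0 R33)ᵀ *
        Matrix.fromBlocks (Matrix.fromBlocks R11 R12 0 R22)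
          (Matrix.fromRows R13 R23) 0 R33)
    -- defining equation of the downdated bottom-right Cholesky block
    (hS33 : S33ᵀ * S33 = R23ᵀ * R23 + R33ᵀ * R33) :
    (Matrix.fromBlocks R11 R13 0 S33)ᵀ * Matrix.fromBlocks R11 R13 0 S33 =
      Matrix.fromBlocks K11 K13 K13ᵀ K33 := by
  rw [fromBlocks_zero₂₁_transpose_mul_self] at hchol
  obtain ⟨hK11, hK13, -, hK33⟩ := fromBlocks_inj.mp hchol
  rw [fromBlocks_zero₂₁_transpose_mul_self] at hK11
  rw [fromBlocks_zero₂₁_transpose_mul_fromRows] at hK13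
  rw [fromRows_transpose_mul_self] at hK33
  obtain ⟨hK11, -, -, -⟩ := fromBlocks_inj.mp hK11
  obtain ⟨hK13, -⟩ := fromRows_inj hK13
  rw [fromBlocks_zero₂₁_transpose_mul_self, hS33, hK11, hK13, hK33, transpose_mul,
    transpose_transpose, add_assoc]

/-- Cholesky downdate under deletion of the middle block row/column: if `K = Rᵀ R` with
`R` upper block triangular, then `S = [R11, R13; 0, S33]` with
`S33ᵀ S33 = R23ᵀ R23 + R33ᵀ R33` satisfies `Sᵀ S = [K11, K13; K13ᵀ, K33]`. -/
theorem cholesky_downdate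
    {a b c : Type*} [Fintype a] [Fintype b] [Fintype c]
    [DecidableEq a] [DecidableEq b] [DecidableEq c]
    (K11 : Matrix a a ℝ) (K12 : Matrix a b ℝ) (K13 : Matrix a c ℝ)
    (K22 : Matrix b b ℝ) (K23 : Matrix b c ℝ) (K33 : Matrix c c ℝ)
    (R11 : Matrix a a ℝ) (R12 : Matrix a b ℝ) (R13 : Matrix a c ℝ)
    (R22 : Matrix b b ℝ) (R23 : Matrix b c ℝ) (R33 : Matrix c c ℝ)
    (S33 : Matrix c c ℝ)
    -- K is positive definite with Cholesky factor R
    (hK : (Matrix.fromBlocks (Matrix.fromBlocks K11 K12 K12ᵀ K22)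
      (Matrix.fromRows K13 K23) (Matrix.fromCols K13ᵀ K23ᵀ) K33).PosDef)
    (hchol : Matrix.fromBlocks (Matrix.fromBlocks K11 K12 K12ᵀ K22)
        (Matrix.fromRows K13 K23) (Matrix.fromCols K13ᵀ K23ᵀ) K33 =
      (Matrix.fromBlocks (Matrix.fromBlocks R11 R12 0 R22)
          (Matrix.fromRows R13 R23) 0 R33)ᵀ *
        Matrix.fromBlocks (Matrix.fromBlocks R11 R12 0 R22)
          (Matrix.fromRows R13 R23) 0 R33)
    -- defining equation of the downdated bottom-right Cholesky block
    (hS33 : S33ᵀ * S33 = R23ᵀ * R23 + R33ᵀ * R33) :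
    (Matrix.fromBlocks R11 R13 0 S33)ᵀ * Matrix.fromBlocks R11 R13 0 S33 =
      Matrix.fromBlocks K11 K13 K13ᵀ K33 :=
  cholesky_downdate_general K11 K12 K13 K22 K23 K33 R11 R12 R13 R22 R23 R33 S33 hchol hS33
end
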